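/- Let N ≥ 8 be an integer divisible by 4. The (N/4−1) × (N/4−1) real matrix P_1 with entries (P_1)_{pq} = (4/N)·p if q ≥ p and (P_1)_{pq} = −(4/N)·(N/4 − p) if q < p (for 1 ≤ p, q ≤ N/4 − 1) is invertible. -/

import Mathlib

/-!
With `c = 4/N` and `c · (N/4) = 1`, the entries of `P₁` are `c (p + 1) - [q < p]`, so
`(P₁ v)_p = c (p + 1) ∑ v - ∑_{q < p} v_q`. If `P₁ v = 0`, the row `p = 0` gives `∑ v = 0`;
hence every partial sum of `v` vanishes, and so does `v`.
-/

/-- The `(N/4−1) × (N/4−1)` matrix `P₁`, with 1-indexed entries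
`(P₁)_{pq} = (4/N)·p` if `q ≥ p`, and `−(4/N)·(N/4 − p)` if `q < p`.
Here the `Fin` index `p` corresponds to row `p+1`. -/
noncomputable def P1mat (N : ℕ) : Matrix (Fin (N / 4 - 1)) (Fin (N / 4 - 1)) ℝ :=
  fun p q =>
    if (p : ℕ) ≤ (q : ℕ) then (4 / (N : ℝ)) * ((p : ℕ) + 1)
    else -(4 / (N : ℝ)) * ((N : ℝ) / 4 - ((p : ℕ) + 1))

open Finset Matrix

section

variable {K : Type*} [Field K]

theorem eq_zero_of_sum_range_eq_mul_sum {c : K} (hc : c ≠ 0) {n : ℕ} {w : ℕ → K}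
    (h : ∀ p < n, ∑ k ∈ range p, w k = c * (p + 1) * ∑ k ∈ range n, w k) :
    ∀ k < n, w k = 0 := by
  intro k hk
  have hsum : ∑ k ∈ range n, w k = 0 := by simpa [hc] using (h 0 (by omega)).symm
  have hpartial : ∀ p ≤ n, ∑ k ∈ range p, w k = 0 := fun p hp =>
    hp.eq_or_lt.elim (fun e => e ▸ hsum) fun hlt => by rw [h p hlt, hsum, mul_zero]
  simpa [sum_range_succ, hpartial k hk.le] using hpartial (k + 1) hk

def rampSubLowerOnes (c : K) (n : ℕ) : Matrix (Fin n) (Fin n) K :=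
  Matrix.of fun p q => c * ((p : ℕ) + 1) - if q < p then 1 else 0

theorem rampSubLowerOnes_mulVec (c : K) {n : ℕ} (v : Fin n → K) (p : Fin n) :
    (rampSubLowerOnes c n *ᵥ v) p = c * ((p : ℕ) + 1) * ∑ q, v q - ∑ q ∈ Iio p, v q := by
  simp only [mulVec, dotProduct, rampSubLowerOnes, of_apply, sub_mul, sum_sub_distrib,
    ← mul_sum, ite_mul, one_mul, zero_mul, ← sum_filter, filter_gt_eq_Iio]

theorem isUnit_rampSubLowerOnes {c : K} (hc : c ≠ 0) (n : ℕ) :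
    IsUnit (rampSubLowerOnes c n) := by
  rw [← mulVec_injective_iff_isUnit, ← coe_mulVecLin, injective_iff_map_eq_zero]
  intro v hv
  set w : ℕ → K := fun k => if hk : k < n then v ⟨k, hk⟩ else 0
  have hw : ∀ q : Fin n, w q = v q := fun q => by simp [w]
  have hsum_univ : ∑ q, v q = ∑ k ∈ range n, w k := by
    simpa only [hw] using Fin.sum_univ_eq_sum_range w n
  have hsum_Iio (p : Fin n) : ∑ q ∈ Iio p, v q = ∑ k ∈ range p, w k := by
    rw [← Nat.Iio_eq_range, ← Fin.map_valEmbedding_Iio, sum_map]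
    simp [hw]
  have hrow : ∀ p < n, ∑ k ∈ range p, w k = c * (p + 1) * ∑ k ∈ range n, w k := by
    intro p hp
    have hp_row := congrFun hv ⟨p, hp⟩
    rw [coe_mulVecLin, rampSubLowerOnes_mulVec, hsum_univ, hsum_Iio] at hp_row
    exact (sub_eq_zero.mp hp_row).symm
  ext q
  rw [← hw]
  exact eq_zero_of_sum_range_eq_mul_sum hc hrow q q.2

end

theorem P1mat_eq_rampSubLowerOnes {N : ℕ} (hN : N ≠ 0) :
    P1mat N = rampSubLowerOnes (4 / (N : ℝ)) (N / 4 - 1) := by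
  ext p q
  simp only [P1mat, rampSubLowerOnes, of_apply]
  split_ifs
  · omega
  · ring
  · field_simp
    ring
  · omega

theorem P1mat_isUnit (N : ℕ) (hN8 : 8 ≤ N) : IsUnit (P1mat N) := by
  rw [P1mat_eq_rampSubLowerOnes (by omega)]
  exact isUnit_rampSubLowerOnes (by positivity) _
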